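/- arXiv:1408.0988 — 2 statements merged into one kernel-verified Lean document; each statement's English description precedes it below -/
import Mathlib

section
/- Let m ≥ 2, n = 8m⁴ + 8m³ + 12m² + 4m, and let X be the circulant graph X(Z_n; {±1, ±(4m³+4m²+6m+1), ±(4m⁴+4m²−4m), ±(4m⁴+4m²−2m)}) (the largest known circulant graph of degree 8 and diameter k = 2m). Then for every l with 1 ≤ l ≤ m, the number of vertices of X at graph distance exactly l from the vertex 0 equals 8 if l = 1 and equals (8l³ + 16l)/3 if l ≥ 2; i.e., every level l ≤ ⌊(k+1)/2⌋ is maximal in the sense of the Abelian Cayley bound (LM_AC(8,l) = (8l³+16l)/3 for l ≥ 2). -/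
/-!
A walk of length `L` from `0` to `v` in `circulant n g` records an integer vector `z` with
`‖z‖₁ ≤ L` and `v = z ⬝ᵥ g` in `ZMod n`, and every `z` gives a walk of length at most `‖z‖₁`
to `z ⬝ᵥ g`. So if every relation `z ⬝ᵥ g ≡ 0 (mod n)` with `‖z‖₁ ≤ 2r` is trivial, then
`z ↦ z ⬝ᵥ g` is injective on the `ℓ¹`-ball of radius `r`, the distance from `0` to `z ⬝ᵥ g` is
`‖z‖₁` there, and level `l ≤ r` is in bijection with the `ℓ¹`-sphere of radius `l`. In `ℤ⁴` this
sphere has `(8l³ + 16l)/3` points.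

For the generators at hand `n = 4mN` with `N = 2m³ + 2m² + 3m + 1`. In a relation with
`‖z‖₁ ≤ 2m`, reducing modulo `2m` (where `g₁ ≡ 1` and `g₂ ≡ g₃ ≡ 0`) gives `z₀ + z₁ = 2mk` with
`|k| ≤ 1`. Multiplying the quotient relation by `m` and reducing modulo `N` gives
`mk - z₁ + (m² + 1)z₂ + (m² + m + 1)z₃ ≡ 0 (mod N)`, and the left side is too small to be a
nonzero multiple of `N`. This linear relation has no short nonzero solution.
-/

/-- The circulant graph `X(Z_n; {±g 0, …, ±g (f-1)})`: vertices are `ZMod n`, and distinct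
`u, v` are adjacent iff `v - u ≡ ±g i (mod n)` for some `i`. -/
def circulant (n : ℕ) {f : ℕ} (g : Fin f → ℤ) : SimpleGraph (ZMod n) where
  Adj u v := u ≠ v ∧ ∃ i, v - u = (g i : ZMod n) ∨ u - v = (g i : ZMod n)
  symm := by
    constructor
    rintro u v ⟨hne, i, h | h⟩
    · exact ⟨hne.symm, i, Or.inr h⟩
    · exact ⟨hne.symm, i, Or.inl h⟩
  loopless := by constructor; rintro u ⟨hne, -⟩; exact hne rfl

open Finset

def l1Norm {f : ℕ} (x : Fin f → ℤ) : ℕ := ∑ i, (x i).natAbs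

section l1Norm

variable {f : ℕ}

@[simp]
lemma l1Norm_zero : l1Norm (0 : Fin f → ℤ) = 0 := by simp [l1Norm]

lemma l1Norm_add_le (x y : Fin f → ℤ) : l1Norm (x + y) ≤ l1Norm x + l1Norm y := by
  rw [l1Norm, l1Norm, l1Norm, ← sum_add_distrib]
  exact sum_le_sum fun i _ => Int.natAbs_add_le _ _

lemma l1Norm_sub_le (x y : Fin f → ℤ) : l1Norm (x - y) ≤ l1Norm x + l1Norm y := by
  rw [l1Norm, l1Norm, l1Norm, ← sum_add_distrib]
  exact sum_le_sum fun i _ => Int.natAbs_sub_le _ _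

@[simp]
lemma l1Norm_single (i : Fin f) (a : ℤ) : l1Norm (Pi.single i a) = a.natAbs := by
  rw [l1Norm, ← Fintype.sum_pi_single' i a.natAbs]
  exact sum_congr rfl fun j _ => by rcases eq_or_ne j i with rfl | h <;> simp [*]

lemma natAbs_le_l1Norm (x : Fin f → ℤ) (i : Fin f) : (x i).natAbs ≤ l1Norm x :=
  single_le_sum (f := fun i => (x i).natAbs) (fun _ _ => Nat.zero_le _) (mem_univ i)

end l1Norm

def NoShortRelations (n : ℕ) {f : ℕ} (g : Fin f → ℤ) (R : ℕ) : Prop :=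
  ∀ z : Fin f → ℤ, l1Norm z ≤ R → ((z ⬝ᵥ g : ℤ) : ZMod n) = 0 → z = 0

noncomputable def l1Sphere (f l : ℕ) : Finset (Fin f → ℤ) :=
  (Fintype.piFinset fun _ => Icc (-(l : ℤ)) l).filter (l1Norm · = l)

section l1Sphere

variable {f l : ℕ}

lemma mem_l1Sphere {x : Fin f → ℤ} : x ∈ l1Sphere f l ↔ l1Norm x = l := by
  simp only [l1Sphere, mem_filter, Fintype.mem_piFinset, mem_Icc, and_iff_right_iff_imp]
  rintro rfl i
  have := natAbs_le_l1Norm x i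
  omega

lemma card_l1Sphere_zero (f : ℕ) : #(l1Sphere f 0) = 1 := by
  rw [card_eq_one]
  refine ⟨0, eq_singleton_iff_unique_mem.mpr ⟨by simp [mem_l1Sphere, l1Norm], fun x hx => ?_⟩⟩
  simpa [mem_l1Sphere, l1Norm, sum_eq_zero_iff, funext_iff] using hx

lemma card_l1Sphere_dim_zero (l : ℕ) : #(l1Sphere 0 (l + 1)) = 0 := by
  simp [card_eq_zero, eq_empty_iff_forall_notMem, mem_l1Sphere, l1Norm]

lemma card_l1Sphere_succ_dim (f l : ℕ) :
    #(l1Sphere (f + 1) l) = ∑ a ∈ Icc (-(l : ℤ)) l, #(l1Sphere f (l - a.natAbs)) := by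
  rw [← card_sigma]
  refine card_nbij' (fun x => ⟨x 0, Fin.tail x⟩) (fun p => Fin.cons p.1 p.2) ?_ ?_ ?_ ?_
  · intro x hx
    simp only [coe_sigma, Set.mem_sigma_iff, mem_coe, mem_Icc, mem_l1Sphere, l1Norm,
      Fin.sum_univ_succ, Fin.tail] at hx ⊢
    omega
  · rintro ⟨a, y⟩ h
    simp only [coe_sigma, Set.mem_sigma_iff, mem_coe, mem_Icc, mem_l1Sphere, l1Norm,
      Fin.sum_univ_succ, Fin.cons_zero, Fin.cons_succ] at h ⊢
    omega
  · intro x _; simp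
  · rintro ⟨a, y⟩ _; simp

lemma sum_Icc_natAbs (h : ℕ → ℕ) (L : ℕ) :
    ∑ a ∈ Icc (-(L : ℤ)) L, h a.natAbs = h 0 + 2 * ∑ j ∈ range L, h (j + 1) := by
  induction L with
  | zero => simp
  | succ L ih =>
    have hIcc : Icc (-((L + 1 : ℕ) : ℤ)) (L + 1 : ℕ)
        = insert (-(L + 1 : ℤ)) (insert (L + 1 : ℤ) (Icc (-(L : ℤ)) L)) := by
      ext a; simp only [mem_Icc, mem_insert]; omega
    rw [hIcc, sum_insert (by simp only [mem_insert, mem_Icc]; omega), sum_insert (by simp), ih,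
      sum_range_succ]
    have h1 : (-(L + 1 : ℤ)).natAbs = L + 1 := by omega
    have h2 : (L + 1 : ℤ).natAbs = L + 1 := by omega
    rw [h1, h2]
    ring

lemma card_l1Sphere_succ (f l : ℕ) :
    #(l1Sphere (f + 1) l) = #(l1Sphere f l) + 2 * ∑ i ∈ range l, #(l1Sphere f i) := by
  rw [card_l1Sphere_succ_dim, sum_Icc_natAbs (fun j => #(l1Sphere f (l - j))), Nat.sub_zero,
    ← sum_range_reflect]
  congr 2
  exact sum_congr rfl fun j hj => by rw [mem_range] at hj; congr 2; omega

lemma card_l1Sphere_succ_succ (f l : ℕ) :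
    #(l1Sphere (f + 1) (l + 1))
      = #(l1Sphere (f + 1) l) + #(l1Sphere f (l + 1)) + #(l1Sphere f l) := by
  rw [card_l1Sphere_succ, card_l1Sphere_succ, sum_range_succ]
  ring

lemma card_l1Sphere_one (l : ℕ) : #(l1Sphere 1 (l + 1)) = 2 := by
  induction l with
  | zero =>
    rw [card_l1Sphere_succ_succ, card_l1Sphere_zero, card_l1Sphere_dim_zero, card_l1Sphere_zero]
  | succ l ih => rw [card_l1Sphere_succ_succ, ih, card_l1Sphere_dim_zero, card_l1Sphere_dim_zero]

lemma card_l1Sphere_two (l : ℕ) : #(l1Sphere 2 (l + 1)) = 4 * (l + 1) := by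
  induction l with
  | zero => rw [card_l1Sphere_succ_succ, card_l1Sphere_zero, card_l1Sphere_one, card_l1Sphere_zero]
  | succ l ih => rw [card_l1Sphere_succ_succ, ih, card_l1Sphere_one, card_l1Sphere_one]; ring

lemma card_l1Sphere_three (l : ℕ) : #(l1Sphere 3 (l + 1)) = 4 * (l + 1) ^ 2 + 2 := by
  induction l with
  | zero =>
    rw [card_l1Sphere_succ_succ, card_l1Sphere_zero, card_l1Sphere_two, card_l1Sphere_zero]; rfl
  | succ l ih => rw [card_l1Sphere_succ_succ, ih, card_l1Sphere_two, card_l1Sphere_two]; ring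

lemma three_mul_card_l1Sphere_four (l : ℕ) :
    3 * #(l1Sphere 4 (l + 1)) = 8 * (l + 1) ^ 3 + 16 * (l + 1) := by
  induction l with
  | zero =>
    rw [card_l1Sphere_succ_succ, card_l1Sphere_zero, card_l1Sphere_three, card_l1Sphere_zero]; rfl
  | succ l ih =>
    rw [card_l1Sphere_succ_succ, mul_add, mul_add, ih, card_l1Sphere_three, card_l1Sphere_three]
    ring

end l1Sphere

namespace circulant

variable {n f : ℕ} {g : Fin f → ℤ}

lemma exists_walk_of_sub_eq {u w : ZMod n} {i : Fin f}
    (h : w - u = (g i : ZMod n) ∨ u - w = (g i : ZMod n)) :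
    ∃ p : (circulant n g).Walk u w, p.length ≤ 1 := by
  by_cases huw : u = w
  · subst huw; exact ⟨.nil, zero_le_one⟩
  · exact ⟨(show (circulant n g).Adj u w from ⟨huw, i, h⟩).toWalk, le_rfl⟩

lemma exists_walk_add_mul (u : ZMod n) (i : Fin f) (a : ℤ) :
    ∃ p : (circulant n g).Walk u (u + (a : ZMod n) * (g i : ZMod n)), p.length ≤ a.natAbs := by
  induction a using Int.induction_on with
  | zero => exact ⟨.copy .nil rfl (by simp), by simp⟩
  | succ a ih =>
    obtain ⟨p, hp⟩ := ih
    obtain ⟨q, hq⟩ := exists_walk_of_sub_eq (g := g) (Or.inl (show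
      u + ((a + 1 : ℤ) : ZMod n) * g i - (u + ((a : ℤ) : ZMod n) * g i) = g i by push_cast; ring))
    exact ⟨p.append q, by rw [SimpleGraph.Walk.length_append]; omega⟩
  | pred a ih =>
    obtain ⟨p, hp⟩ := ih
    obtain ⟨q, hq⟩ := exists_walk_of_sub_eq (g := g) (Or.inr (show
      u + ((-a : ℤ) : ZMod n) * g i - (u + ((-a - 1 : ℤ) : ZMod n) * g i) = g i by push_cast; ring))
    exact ⟨p.append q, by rw [SimpleGraph.Walk.length_append]; omega⟩

lemma exists_walk_of_l1Norm (x : Fin f → ℤ) :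
    ∃ p : (circulant n g).Walk 0 ((x ⬝ᵥ g : ℤ) : ZMod n), p.length ≤ l1Norm x := by
  suffices ∀ s : Finset (Fin f), ∃ p : (circulant n g).Walk 0 ((∑ i ∈ s, x i * g i : ℤ) : ZMod n),
      p.length ≤ ∑ i ∈ s, (x i).natAbs from this univ
  intro s
  induction s using Finset.induction_on with
  | empty =>
    exact ⟨.copy .nil rfl (by simp), by simp only [SimpleGraph.Walk.length_copy,
      SimpleGraph.Walk.length_nil, zero_le]⟩
  | insert i s hi ih =>
    obtain ⟨p, hp⟩ := ih
    obtain ⟨q, hq⟩ := exists_walk_add_mul (g := g) _ i (x i)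
    refine ⟨(p.append q).copy rfl (by push_cast [sum_insert hi]; ring), ?_⟩
    rw [SimpleGraph.Walk.length_copy, SimpleGraph.Walk.length_append, sum_insert hi]
    omega

lemma exists_single_of_adj {u w : ZMod n} (h : (circulant n g).Adj u w) :
    ∃ i, ∃ ε : ℤ, ε.natAbs = 1 ∧ w - u = ((Pi.single i ε ⬝ᵥ g : ℤ) : ZMod n) := by
  obtain ⟨-, i, h | h⟩ := h
  · exact ⟨i, 1, rfl, by simp [h]⟩
  · exact ⟨i, -1, rfl, by simp [← h]⟩

lemma exists_l1Norm_le_of_walk {u v : ZMod n} (p : (circulant n g).Walk u v) :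
    ∃ x : Fin f → ℤ, l1Norm x ≤ p.length ∧ v - u = ((x ⬝ᵥ g : ℤ) : ZMod n) := by
  induction p with
  | nil => exact ⟨0, by simp, by simp⟩
  | cons h q ih =>
    obtain ⟨x, hx, hxv⟩ := ih
    obtain ⟨i, ε, hε, hεw⟩ := exists_single_of_adj h
    refine ⟨x + Pi.single i ε, ?_, ?_⟩
    · grw [l1Norm_add_le, l1Norm_single, hx, hε, SimpleGraph.Walk.length_cons]
    · rw [add_dotProduct, Int.cast_add, ← hxv, ← hεw]; ring

variable {r : ℕ}

lemma eq_of_cast_dotProduct_eq (hrel : NoShortRelations n g (2 * r))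
    {x y : Fin f → ℤ} (hx : l1Norm x ≤ r) (hy : l1Norm y ≤ r)
    (h : ((x ⬝ᵥ g : ℤ) : ZMod n) = ((y ⬝ᵥ g : ℤ) : ZMod n)) : x = y :=
  sub_eq_zero.mp <| hrel _ (by grw [l1Norm_sub_le, hx, hy]; omega)
    (by rw [sub_dotProduct, Int.cast_sub, h, sub_self])

lemma dist_eq_l1Norm (hrel : NoShortRelations n g (2 * r)) {x : Fin f → ℤ} (hx : l1Norm x ≤ r) :
    (circulant n g).dist 0 ((x ⬝ᵥ g : ℤ) : ZMod n) = l1Norm x := by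
  obtain ⟨p, hp⟩ := exists_walk_of_l1Norm (n := n) (g := g) x
  obtain ⟨q, hq⟩ := p.reachable.exists_walk_length_eq_dist
  obtain ⟨y, hy, hyq⟩ := exists_l1Norm_le_of_walk q
  have hdist := SimpleGraph.dist_le p
  rw [sub_zero] at hyq
  obtain rfl := eq_of_cast_dotProduct_eq hrel hx (by omega) hyq
  omega

theorem ncard_setOf_dist_eq (hrel : NoShortRelations n g (2 * r)) {l : ℕ} (hl : 1 ≤ l)
    (hlr : l ≤ r) :
    {v : ZMod n | (circulant n g).dist 0 v = l}.ncard = #(l1Sphere f l) := by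
  have hlevel : {v : ZMod n | (circulant n g).dist 0 v = l}
      = (l1Sphere f l).image fun x => ((x ⬝ᵥ g : ℤ) : ZMod n) := by
    ext v
    simp only [Set.mem_ofPred_eq, coe_image, Set.mem_image, mem_coe, mem_l1Sphere]
    constructor
    · intro hv
      have hv0 : (circulant n g).dist 0 v ≠ 0 := by omega
      obtain ⟨p, hp⟩ := SimpleGraph.exists_walk_of_dist_ne_zero hv0
      obtain ⟨x, hx, hxv⟩ := exists_l1Norm_le_of_walk p
      rw [sub_zero] at hxv
      subst hxv
      exact ⟨x, by rw [← hv, dist_eq_l1Norm hrel (by omega)], rfl⟩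
    · rintro ⟨x, rfl, rfl⟩
      exact dist_eq_l1Norm hrel hlr
  rw [hlevel, Set.ncard_coe_finset, card_image_of_injOn]
  intro x hx y hy
  exact eq_of_cast_dotProduct_eq hrel ((mem_l1Sphere.mp hx).trans_le hlr)
    ((mem_l1Sphere.mp hy).trans_le hlr)

end circulant

lemma eq_zero_of_add_mul_add_mul_eq_zero {M a c d : ℤ} (hM : 2 ≤ M)
    (h : a + c * (M ^ 2 + 1) + d * (M ^ 2 + M + 1) = 0) (hs : 2 * |a| + |c| + |d| ≤ 2 * M) :
    a = 0 ∧ c = 0 ∧ d = 0 := by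
  -- With `s = c + d` and `K = M s + d` the relation reads `a + s + M K = 0`.
  obtain ⟨s, K, rfl, rfl, rfl⟩ :
      ∃ s K, c = (M + 1) * s - K ∧ d = K - M * s ∧ a = -s - M * K :=
    ⟨c + d, M * (c + d) + d, by ring, by ring, by linear_combination h⟩
  have hK : |K| < 3 := by
    refine lt_of_mul_lt_mul_left ?_ (by omega : 0 ≤ M)
    calc M * |K| = |(-s - M * K) + ((M + 1) * s - K) + (K - M * s)| := by
            rw [show -s - M * K + ((M + 1) * s - K) + (K - M * s) = -(M * K) by ring, abs_neg,
              abs_mul, abs_of_pos (by omega : 0 < M)]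
      _ ≤ |-s - M * K| + |(M + 1) * s - K| + |K - M * s| := abs_add_three _ _ _
      _ < M * 3 := by linarith [abs_nonneg (-s - M * K)]
  have hs1 : |s| < 2 := by
    refine lt_of_mul_lt_mul_left ?_ (by omega : 0 ≤ 2 * M + 1)
    calc (2 * M + 1) * |s| = |((M + 1) * s - K) - (K - M * s) + 2 * K| := by
            rw [← abs_of_pos (by omega : 0 < 2 * M + 1), ← abs_mul]; congr 1; ring
      _ ≤ |(M + 1) * s - K| + |K - M * s| + 2 * |K| := by
            grw [abs_add_le, abs_sub, abs_mul, abs_two]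
      _ < (2 * M + 1) * 2 := by linarith [abs_nonneg (-s - M * K)]
  rw [abs_lt] at hK hs1
  simp only [abs_eq_max_neg] at hs
  obtain ⟨hK1, hK2⟩ := hK
  obtain ⟨hs1, hs2⟩ := hs1
  interval_cases K <;> interval_cases s <;> omega

lemma abs_reduced_relation_lt {M k b c d : ℤ} (hM : 2 ≤ M) (hk : |k| ≤ 1)
    (hs : |b| + |c| + |d| ≤ 2 * M) :
    |M * k - b + c * (M ^ 2 + 1) + d * (M ^ 2 + M + 1)| < 2 * M ^ 3 + 2 * M ^ 2 + 3 * M + 1 := by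
  have hMk : |M * k| ≤ M := by
    rw [abs_mul, abs_of_pos (by omega : 0 < M)]; nlinarith
  calc |M * k - b + c * (M ^ 2 + 1) + d * (M ^ 2 + M + 1)|
      ≤ |M * k| + |b| + |c * (M ^ 2 + 1)| + |d * (M ^ 2 + M + 1)| := by
        grw [abs_add_le, abs_add_le, abs_sub]
    _ = |M * k| + |b| + |c| * (M ^ 2 + 1) + |d| * (M ^ 2 + M + 1) := by
        rw [abs_mul c, abs_mul d, abs_of_nonneg (by positivity : (0 : ℤ) ≤ M ^ 2 + 1),
          abs_of_nonneg (by positivity : 0 ≤ M ^ 2 + M + 1)]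
    _ ≤ M + (|b| + |c| + |d|) * (M ^ 2 + M + 1) := by
        nlinarith [abs_nonneg b, abs_nonneg c]
    _ < 2 * M ^ 3 + 2 * M ^ 2 + 3 * M + 1 := by nlinarith

theorem eq_zero_of_dvd_of_abs_add_le {M a b c d : ℤ} (hM : 2 ≤ M)
    (h : 8 * M ^ 4 + 8 * M ^ 3 + 12 * M ^ 2 + 4 * M ∣ a + b * (4 * M ^ 3 + 4 * M ^ 2 + 6 * M + 1)
      + c * (4 * M ^ 4 + 4 * M ^ 2 - 4 * M) + d * (4 * M ^ 4 + 4 * M ^ 2 - 2 * M))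
    (hs : |a| + |b| + |c| + |d| ≤ 2 * M) : a = 0 ∧ b = 0 ∧ c = 0 ∧ d = 0 := by
  obtain ⟨t, ht⟩ := h
  obtain ⟨k, hab, hk⟩ : ∃ k, a + b = 2 * M * k ∧
      k + b * (2 * M ^ 2 + 2 * M + 3) + c * (2 * M ^ 3 + 2 * M - 2) + d * (2 * M ^ 3 + 2 * M - 1)
        = 2 * t * (2 * M ^ 3 + 2 * M ^ 2 + 3 * M + 1) :=
    ⟨2 * t * (2 * M ^ 3 + 2 * M ^ 2 + 3 * M + 1) - b * (2 * M ^ 2 + 2 * M + 3)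
      - c * (2 * M ^ 3 + 2 * M - 2) - d * (2 * M ^ 3 + 2 * M - 1), by linear_combination ht,
      by ring⟩
  have hab_abs : |a + b| ≤ |a| + |b| := abs_add_le a b
  have hk1 : |k| ≤ 1 := by
    refine le_of_mul_le_mul_left ?_ (by omega : 0 < 2 * M)
    rw [← abs_of_pos (by omega : 0 < 2 * M), ← abs_mul, ← hab, abs_of_pos (by omega : 0 < 2 * M)]
    linarith [abs_nonneg c, abs_nonneg d]
  -- `M (2M² + 2M + 3) = N - 1` and `M (2M³ + 2M - 2) = M² + 1 + (M - 1) N`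
  have hrel : M * k - b + c * (M ^ 2 + 1) + d * (M ^ 2 + M + 1) = 0 :=
    Int.eq_zero_of_abs_lt_dvd ⟨2 * t * M - b - (M - 1) * (c + d), by linear_combination M * hk⟩
      (abs_reduced_relation_lt hM hk1 (by linarith [abs_nonneg a]))
  rcases (by rw [abs_le] at hk1; omega : k = 0 ∨ k = 1 ∨ k = -1) with rfl | hk1
  · obtain rfl : b = -a := by linarith
    obtain ⟨ha, hc, hd⟩ := eq_zero_of_add_mul_add_mul_eq_zero hM
      (show a + c * (M ^ 2 + 1) + d * (M ^ 2 + M + 1) = 0 by linarith)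
      (by rw [abs_neg] at hs; linarith)
    exact ⟨ha, by simp [ha], hc, hd⟩
  · exfalso
    have h2M : |a + b| = 2 * M := by
      rcases hk1 with rfl | rfl <;> simp [hab, abs_of_pos (by omega : 0 < M)]
    obtain ⟨rfl, rfl⟩ : c = 0 ∧ d = 0 := by
      constructor <;> apply abs_nonpos_iff.mp <;> linarith [abs_nonneg c, abs_nonneg d]
    obtain rfl : b = M * k := by linarith
    have hk2t : k = 2 * t := mul_left_cancel₀ (by nlinarith : 2 * M ^ 3 + 2 * M ^ 2 + 3 * M + 1 ≠ 0)
      (by linear_combination hk)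
    omega

lemma noShortRelations_of_two_le {m : ℕ} (hm : 2 ≤ m) :
    NoShortRelations (f := 4) (8*m^4+8*m^3+12*m^2+4*m) ![(1 : ℤ), 4*(m : ℤ)^3+4*m^2+6*m+1,
      4*(m : ℤ)^4+4*m^2-4*m, 4*(m : ℤ)^4+4*m^2-2*m] (2 * m) := by
  intro z hz h
  rw [ZMod.intCast_zmod_eq_zero_iff_dvd] at h
  have hz' : |z 0| + |z 1| + |z 2| + |z 3| ≤ 2 * (m : ℤ) := by
    simp only [l1Norm, Fin.sum_univ_four] at hz
    simp only [← Int.natCast_natAbs]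
    exact_mod_cast hz
  obtain ⟨h0, h1, h2, h3⟩ := eq_zero_of_dvd_of_abs_add_le (by exact_mod_cast hm)
    (by simpa [dotProduct, Fin.sum_univ_four] using h) hz'
  ext i; fin_cases i <;> assumption

/-- For the largest known circulant graph of degree 8 and diameter `k = 2m` (order
`n = 8m⁴+8m³+12m²+4m`, generators `1`, `4m³+4m²+6m+1`, `4m⁴+4m²−4m`, `4m⁴+4m²−2m`),
every distance partition level `l` with `1 ≤ l ≤ m = ⌊(k+1)/2⌋` is maximal: it has `8`
vertices if `l = 1` and `(8l³+16l)/3 = LM_AC(8, l)` vertices if `l ≥ 2`. -/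
theorem stmt4 (m : ℕ) (hm : 2 ≤ m) (l : ℕ) (hl1 : 1 ≤ l) (hl2 : l ≤ m) :
    let n : ℕ := 8*m^4+8*m^3+12*m^2+4*m
    let X := circulant n ![(1 : ℤ), 4*(m : ℤ)^3+4*m^2+6*m+1,
      4*(m : ℤ)^4+4*m^2-4*m, 4*(m : ℤ)^4+4*m^2-2*m]
    (l = 1 → {v : ZMod n | X.dist 0 v = l}.ncard = 8) ∧
    (2 ≤ l → {v : ZMod n | X.dist 0 v = l}.ncard = (8*l^3+16*l)/3) := by
  intro n X
  have hlevel : {v : ZMod n | X.dist 0 v = l}.ncard = (8 * l ^ 3 + 16 * l) / 3 := by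
    rw [circulant.ncard_setOf_dist_eq (noShortRelations_of_two_le hm) hl1 hl2]
    obtain ⟨l, rfl⟩ : ∃ l', l = l' + 1 := ⟨l - 1, by omega⟩
    rw [← three_mul_card_l1Sphere_four]
    omega
  exact ⟨fun hl => by subst hl; simpa using hlevel, fun _ => hlevel⟩
end

section
/- Let m ≥ 1, n = 32m³ + 16m² + 6m + 1, and let X be the circulant graph X(Z_n; {±1, ±(4m+1), ±(16m²+4m+1)}) (the largest known circulant graph of degree 6 and diameter k = 3m, isomorphism class 1). Then the total number of type T_1 vertices of X, i.e., the number of vertices v ≠ 0 having exactly one neighbor at distance dist(0,v) − 1 from 0, equals 4k = 12m. -/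
namespace SimpleGraph

variable {V : Type*} (G : SimpleGraph V)

def parents (r v : V) : Set V := {u | G.Adj v u ∧ G.dist r u = G.dist r v - 1}

theorem dist_eq_of_descent {r : V} (D : V → ℕ) (hD : ∀ v, D v = 0 ↔ v = r)
    (hdesc : ∀ v, v ≠ r → ∃ u, G.Adj u v ∧ D u + 1 = D v)
    (hlip : ∀ u v, G.Adj u v → D v ≤ D u + 1) (v : V) : G.dist r v = D v := by
  have walk : ∀ k v, D v = k → ∃ p : G.Walk r v, p.length = k := by
    intro k
    induction k with
    | zero => intro v hv; obtain rfl := (hD v).1 hv; exact ⟨.nil, rfl⟩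
    | succ k ih =>
      intro v hv
      obtain ⟨u, huv, hu⟩ := hdesc v fun h => by simp [(hD v).2 h] at hv
      obtain ⟨p, hp⟩ := ih u (by omega)
      exact ⟨p.concat huv, by simp [hp]⟩
  have lower : ∀ u w (p : G.Walk u w), D w ≤ D u + p.length := by
    intro u w p
    induction p with
    | nil => simp
    | cons h _ ih => have := hlip _ _ h; simp only [Walk.length_cons]; omega
  obtain ⟨p, hp⟩ := walk (D v) v rfl
  obtain ⟨q, hq⟩ := p.reachable.exists_walk_length_eq_dist
  have := dist_le p
  have := lower r v q
  have := (hD r).2 rfl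
  omega

end SimpleGraph

namespace circulant

variable {n f : ℕ}

def eval (g x : Fin f → ℤ) : ZMod n := ((x ⬝ᵥ g : ℤ) : ZMod n)

def weight (x : Fin f → ℤ) : ℕ := ∑ i, (x i).natAbs

noncomputable def minWeight (g : Fin f → ℤ) (v : ZMod n) : ℕ :=
  sInf {w | ∃ x, eval g x = v ∧ weight x = w}

section weight

variable (x y : Fin f → ℤ)

theorem weight_eq_zero_iff : weight x = 0 ↔ x = 0 := by
  simp [weight, Finset.sum_eq_zero_iff, funext_iff]

theorem weight_single (i : Fin f) (c : ℤ) : weight (Pi.single i c) = c.natAbs := by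
  simp [weight, Pi.single_apply, apply_ite]

theorem weight_sub_le : weight (x - y) ≤ weight x + weight y := by
  rw [weight, weight, weight, ← Finset.sum_add_distrib]
  exact Finset.sum_le_sum fun i _ => Int.natAbs_sub_le (x i) (y i)

theorem weight_add_single (i : Fin f) (e : ℤ) :
    weight (x + Pi.single i e) + (x i).natAbs = weight x + (x i + e).natAbs := by
  have hrest : ∑ j ∈ Finset.univ.erase i, ((x + Pi.single i e : Fin f → ℤ) j).natAbs =
      ∑ j ∈ Finset.univ.erase i, (x j).natAbs :=
    Finset.sum_congr rfl fun j hj => by simp [Finset.ne_of_mem_erase hj]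
  rw [weight, weight, ← Finset.add_sum_erase _ _ (Finset.mem_univ i),
    ← Finset.add_sum_erase _ (fun j => (x j).natAbs) (Finset.mem_univ i), hrest]
  simp only [Pi.add_apply, Pi.single_eq_same]
  ring

end weight

theorem weight_fin_three (x : Fin 3 → ℤ) :
    weight x = (x 0).natAbs + (x 1).natAbs + (x 2).natAbs := by
  simp [weight, Fin.sum_univ_three]

section eval

variable (g x y : Fin f → ℤ)

theorem eval_zero : (eval g 0 : ZMod n) = 0 := by simp [eval]

theorem eval_add : (eval g (x + y) : ZMod n) = eval g x + eval g y := by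
  simp [eval, add_dotProduct]

theorem eval_sub : (eval g (x - y) : ZMod n) = eval g x - eval g y := by
  simp [eval, sub_dotProduct]

theorem eval_smul (k : ℤ) : (eval g (k • x) : ZMod n) = (k : ZMod n) * eval g x := by
  rw [eval, eval, smul_dotProduct, smul_eq_mul, Int.cast_mul]

theorem eval_single (i : Fin f) (c : ℤ) :
    (eval g (Pi.single i c) : ZMod n) = ((c * g i : ℤ) : ZMod n) := by
  simp [eval]

theorem exists_eval_eq_of_eq_one {i : Fin f} (hi : g i = 1) (v : ZMod n) :
    ∃ x, eval g x = v :=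
  ⟨Pi.single i v.cast, by simp [eval_single, hi]⟩

end eval

theorem adj_iff {g : Fin f → ℤ} {u v : ZMod n} :
    (circulant n g).Adj u v ↔
      u ≠ v ∧ ∃ i e, e.natAbs = 1 ∧ v = u + eval g (Pi.single i e) := by
  simp only [eval_single]
  constructor
  · rintro ⟨hne, i, h | h⟩
    · exact ⟨hne, i, 1, rfl, by simp [← h]⟩
    · exact ⟨hne, i, -1, rfl, by simp [← h]⟩
  · rintro ⟨hne, i, e, he, rfl⟩
    refine ⟨hne, i, ?_⟩
    rcases Int.natAbs_eq_iff.1 he with rfl | rfl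
    · left; push_cast; ring
    · right; push_cast; ring

variable (g : Fin f → ℤ)

theorem minWeight_le {v : ZMod n} {x : Fin f → ℤ} (hx : eval g x = v) :
    minWeight g v ≤ weight x :=
  Nat.sInf_le ⟨x, hx, rfl⟩

theorem exists_weight_eq_minWeight {v : ZMod n} (hv : ∃ x, eval g x = v) :
    ∃ x, eval g x = v ∧ weight x = minWeight g v := by
  obtain ⟨x, hx⟩ := hv
  exact Nat.sInf_mem (s := {w | ∃ x, eval g x = v ∧ weight x = w}) ⟨_, x, hx, rfl⟩

variable {g}

theorem eq_of_eval_eq {r : ℕ}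
    (hL : ∀ z, weight z ≤ 2 * r → (eval g z : ZMod n) = 0 → z = 0) {x y : Fin f → ℤ}
    (hx : weight x ≤ r) (hy : weight y ≤ r) (h : (eval g x : ZMod n) = eval g y) : x = y :=
  sub_eq_zero.1 <| hL _ (by have := weight_sub_le x y; omega) (by rw [eval_sub, h, sub_self])

theorem minWeight_eq_zero_iff (hg : ∀ v : ZMod n, ∃ x, eval g x = v) {v : ZMod n} :
    minWeight g v = 0 ↔ v = 0 := by
  constructor
  · intro h
    obtain ⟨x, rfl, hx⟩ := exists_weight_eq_minWeight g (hg v)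
    rw [(weight_eq_zero_iff x).1 (hx.trans h), eval_zero]
  · rintro rfl
    exact Nat.le_zero.1 ((minWeight_le g (eval_zero g)).trans_eq ((weight_eq_zero_iff _).2 rfl))

theorem minWeight_le_of_adj (hg : ∀ v : ZMod n, ∃ x, eval g x = v) {u v : ZMod n}
    (h : (circulant n g).Adj u v) :
    minWeight g v ≤ minWeight g u + 1 := by
  obtain ⟨-, i, e, he, rfl⟩ := adj_iff.1 h
  obtain ⟨x, rfl, hx⟩ := exists_weight_eq_minWeight g (hg u)
  have hstep := weight_add_single x i e
  have := minWeight_le g (eval_add (n := n) g x (Pi.single i e))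
  omega

theorem adj_sub_sign_of_weight_eq_minWeight (hg : ∀ v : ZMod n, ∃ x, eval g x = v)
    {v : ZMod n} {x : Fin f → ℤ} (hx : eval g x = v)
    (hw : weight x = minWeight g v) {i : Fin f} (hi : x i ≠ 0) :
    (circulant n g).Adj v (v - eval g (Pi.single i (x i).sign)) ∧
      minWeight g (v - eval g (Pi.single i (x i).sign)) + 1 = minWeight g v := by
  set u := v - eval g (Pi.single i (x i).sign)
  have hstep : weight (x - Pi.single i (x i).sign) + 1 = weight x := by
    have h := weight_add_single x i (-(x i).sign)
    simp only [Pi.single_neg, ← sub_eq_add_neg] at h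
    have habs : (x i - (x i).sign).natAbs + 1 = (x i).natAbs := by
      rcases hi.lt_or_gt with hneg | hpos
      · rw [Int.sign_eq_neg_one_of_neg hneg]; omega
      · rw [Int.sign_eq_one_of_pos hpos]; omega
    omega
  have hu : minWeight g u ≤ weight (x - Pi.single i (x i).sign) :=
    minWeight_le g (by rw [eval_sub, hx])
  have hadj : (circulant n g).Adj v u := by
    refine adj_iff.2 ⟨fun h => ?_, i, -(x i).sign, ?_, ?_⟩
    · rw [← h] at hu; omega
    · rcases hi.lt_or_gt with hneg | hpos
      · rw [Int.sign_eq_neg_one_of_neg hneg]; rfl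
      · rw [Int.sign_eq_one_of_pos hpos]; rfl
    · simp only [u, eval_single]; push_cast; ring
  have := minWeight_le_of_adj hg hadj.symm
  exact ⟨hadj, by omega⟩

theorem dist_zero_eq_minWeight (hg : ∀ v : ZMod n, ∃ x, eval g x = v) (v : ZMod n) :
    (circulant n g).dist 0 v = minWeight g v := by
  refine SimpleGraph.dist_eq_of_descent _ _ (fun _ => minWeight_eq_zero_iff hg)
    (fun v hv => ?_) (fun _ _ => minWeight_le_of_adj hg) v
  obtain ⟨x, hx, hw⟩ := exists_weight_eq_minWeight g (hg v)
  have hx0 : x ≠ 0 := by rintro rfl; exact hv (hx ▸ eval_zero g)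
  obtain ⟨i, hi⟩ := Function.ne_iff.1 hx0
  obtain ⟨hadj, hmw⟩ := adj_sub_sign_of_weight_eq_minWeight hg hx hw hi
  exact ⟨_, hadj.symm, hmw⟩

theorem mem_parents_zero_iff (hg : ∀ v : ZMod n, ∃ x, eval g x = v) {u v : ZMod n} :
    u ∈ (circulant n g).parents 0 v ↔ ∃ x i, eval g x = v ∧ weight x = minWeight g v ∧
      x i ≠ 0 ∧ u = v - eval g (Pi.single i (x i).sign) := by
  simp only [SimpleGraph.parents, Set.mem_ofPred_eq, dist_zero_eq_minWeight hg]
  constructor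
  · rintro ⟨hadj, hu⟩
    obtain ⟨hne, i, e, he, rfl⟩ := adj_iff.1 hadj
    obtain ⟨y, hy, hyw⟩ := exists_weight_eq_minWeight g (hg (v + eval g (Pi.single i e)))
    set x := y - Pi.single i e
    have hx : eval g x = v := by rw [eval_sub, hy, add_sub_cancel_right]
    have hv0 : minWeight g v ≠ 0 := by
      intro h
      have hu0 := (minWeight_eq_zero_iff hg).1 (show minWeight g (v + eval g (Pi.single i e)) = 0
        by omega)
      exact hne (((minWeight_eq_zero_iff hg).1 h).trans hu0.symm)
    -- `x` has weight at most `weight y + 1 = minWeight g v`, so it is minimal; as `y` is lighter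
    -- than `x`, adding `e` to `x i` moved it towards `0`.
    have hsplit := weight_add_single x i e
    rw [sub_add_cancel] at hsplit
    have hxw := minWeight_le g hx
    have hsub := weight_sub_le y (Pi.single i e)
    rw [weight_single] at hsub
    have hxi : x i ≠ 0 := fun h => by rw [h] at hsplit; omega
    refine ⟨x, i, hx, by omega, hxi, ?_⟩
    rcases hxi.lt_or_gt with hneg | hpos
    · obtain rfl : e = 1 := by omega
      rw [Int.sign_eq_neg_one_of_neg hneg, eval_single, eval_single]; push_cast; ring
    · obtain rfl : e = -1 := by omega
      rw [Int.sign_eq_one_of_pos hpos, eval_single, eval_single]; push_cast; ring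
  · rintro ⟨x, i, hx, hw, hi, rfl⟩
    obtain ⟨hadj, hmw⟩ := adj_sub_sign_of_weight_eq_minWeight hg hx hw hi
    exact ⟨hadj, by omega⟩

end circulant

namespace ExtremalCirculant

open circulant

def gens (m : ℕ) : Fin 3 → ℤ :=
  ![1, 4 * (m : ℤ) + 1, 16 * (m : ℤ) ^ 2 + 4 * m + 1]

def order (m : ℕ) : ℕ := 32 * m ^ 3 + 16 * m ^ 2 + 6 * m + 1

variable {m : ℕ}

theorem eval_gens {n : ℕ} (x : Fin 3 → ℤ) :
    (eval (gens m) x : ZMod n) =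
      ((x 0 + x 1 * (4 * m + 1) + x 2 * (16 * m ^ 2 + 4 * m + 1) : ℤ) : ZMod n) := by
  simp [eval, gens, dotProduct, Fin.sum_univ_three]

theorem eq_zero_of_order_dvd {a b c : ℤ} (hw : a.natAbs + b.natAbs + c.natAbs ≤ 4 * m)
    (h : (order m : ℤ) ∣ a + b * (4 * m + 1) + c * (16 * m ^ 2 + 4 * m + 1)) :
    a = 0 ∧ b = 0 ∧ c = 0 := by
  have hs : (0 : ℤ) < 4 * m + 1 := by positivity
  have hval : a + b * (4 * m + 1) + c * (16 * m ^ 2 + 4 * m + 1) =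
      (a + c) + (4 * m + 1) * (b + 4 * m * c) := by ring
  have hord : (order m : ℤ) = (4 * m + 1) * (8 * m ^ 2 + 2 * m + 1) := by
    simp only [order]; push_cast; ring
  rw [hval, hord] at h
  have hac : a + c = 0 := by
    refine Int.eq_zero_of_abs_lt_dvd ((dvd_add_left (dvd_mul_right _ _)).1
      ((dvd_mul_right _ _).trans h)) (abs_lt.2 ⟨by omega, by omega⟩)
  rw [hac, zero_add, mul_dvd_mul_iff_left hs.ne'] at h
  have hmc : (4 * m * c).natAbs = 4 * m * c.natAbs := by
    rw [Int.natAbs_mul]; rfl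
  have hsmall : ∀ B C : ℕ, B + 2 * C ≤ 4 * m → B + 4 * m * C < 8 * m ^ 2 + 2 * m + 1 := by
    intro B C hBC
    rcases m.eq_zero_or_pos with rfl | hm
    · omega
    · have h1 := Nat.mul_le_mul_left (2 * m) hBC
      have h2 := Nat.le_mul_of_pos_left B hm
      nlinarith
  have hbc : b + 4 * m * c = 0 := by
    refine Int.eq_zero_of_dvd_of_natAbs_lt_natAbs h ?_
    rw [show (8 * m ^ 2 + 2 * m + 1 : ℤ) = ((8 * m ^ 2 + 2 * m + 1 : ℕ) : ℤ) by push_cast; ring,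
      Int.natAbs_natCast]
    have := Int.natAbs_add_le b (4 * m * c)
    have := hsmall b.natAbs c.natAbs (by omega)
    omega
  have hc : c = 0 := by
    rw [show b = -(4 * m * c) by omega, show a = -c by omega, Int.natAbs_neg, Int.natAbs_neg,
      hmc] at hw
    by_contra hc
    have : 1 ≤ c.natAbs := Int.natAbs_pos.2 hc
    nlinarith
  subst hc
  omega

theorem eq_zero_of_eval_gens_eq_zero {x : Fin 3 → ℤ} (hw : weight x ≤ 4 * m)
    (hx : (eval (gens m) x : ZMod (order m)) = 0) : x = 0 := by
  rw [eval_gens, ZMod.intCast_zmod_eq_zero_iff_dvd] at hx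
  rw [weight_fin_three] at hw
  obtain ⟨h0, h1, h2⟩ := eq_zero_of_order_dvd hw hx
  ext i; fin_cases i <;> assumption

theorem eq_of_eval_gens_eq {x y : Fin 3 → ℤ} (hx : weight x ≤ 2 * m)
    (hy : weight y ≤ 2 * m)
    (h : (eval (gens m) x : ZMod (order m)) = eval (gens m) y) : x = y :=
  eq_of_eval_eq (fun _ hz => eq_zero_of_eval_gens_eq_zero (by omega)) hx hy h

/-- The relations `-s + s = 0`, `-1 - 4m·s + t = 0` and `-s - s·t = -2n`. -/
def relation (m : ℕ) : Fin 3 → Fin 3 → ℤ :=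
  ![![-(4 * m + 1), 1, 0], ![-1, -(4 * m), 1], ![0, -1, -(4 * m + 1)]]

theorem eval_relation (i : Fin 3) :
    (eval (gens m) (relation m i) : ZMod (order m)) = 0 := by
  rw [eval_gens, ZMod.intCast_zmod_eq_zero_iff_dvd]
  fin_cases i
  · simp [relation]
  · simp [relation]; ring_nf; simp
  · exact ⟨-2, by simp [relation, order]; ring⟩

theorem exists_eval_eq_single_of_two_mul_lt (hm : 1 ≤ m) {c : ℤ} (hc : 2 * m < c.natAbs)
    (i : Fin 3) :
    ∃ y : Fin 3 → ℤ, (eval (gens m) y : ZMod (order m)) =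
      eval (gens m) (Pi.single i c) ∧ weight y ≤ c.natAbs ∧ ∃ j ≠ i, y j ≠ 0 := by
  refine ⟨Pi.single i c + c.sign • relation m i, by
    rw [eval_add, eval_smul, eval_relation, mul_zero, add_zero], ?_⟩
  rw [weight_fin_three]
  rcases (show c ≠ 0 by omega).lt_or_gt with hc0 | hc0 <;>
    simp only [Int.sign_eq_neg_one_of_neg, Int.sign_eq_one_of_pos, hc0] <;>
    fin_cases i <;> exact ⟨by simp [relation]; omega, by simp [relation, Fin.exists_fin_succ]⟩

theorem exists_eval_gens_eq {n : ℕ} (v : ZMod n) : ∃ x, eval (gens m) x = v :=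
  exists_eval_eq_of_eq_one (gens m) (i := 0) rfl v

theorem parents_eval_single {i : Fin 3} {c : ℤ} (hc0 : c ≠ 0) (hc : c.natAbs ≤ 2 * m) :
    (circulant (order m) (gens m)).parents 0
        (eval (gens m) (Pi.single i c)) =
      {eval (gens m) (Pi.single i c) - eval (gens m) (Pi.single i c.sign)} := by
  set v : ZMod (order m) := eval (gens m) (Pi.single i c)
  have hunique :
      ∀ y, weight y ≤ c.natAbs → eval (gens m) y = v → y = Pi.single i c :=
    fun y hy h => eq_of_eval_gens_eq (by omega) (by rwa [weight_single]) h
  have hmin : minWeight (gens m) v ≤ c.natAbs :=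
    (minWeight_le _ rfl).trans_eq (weight_single i c)
  ext u
  rw [mem_parents_zero_iff exists_eval_gens_eq, Set.mem_singleton_iff]
  constructor
  · rintro ⟨x, j, hx, hw, hj, rfl⟩
    obtain rfl := hunique x (by omega) hx
    obtain rfl : j = i := by by_contra h; simp [h] at hj
    simp
  · rintro rfl
    obtain ⟨y, hy, hyw⟩ := exists_weight_eq_minWeight _ (exists_eval_gens_eq (m := m) v)
    obtain rfl := hunique y (by omega) hy
    exact ⟨Pi.single i c, i, rfl, hyw, by simpa, by simp⟩

theorem ncard_parents_ne_one (hm : 1 ≤ m) {v : ZMod (order m)} {x y : Fin 3 → ℤ}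
    {i j : Fin 3} (hij : i ≠ j)
    (hx : eval (gens m) x = v) (hxw : weight x = minWeight (gens m) v)
    (hy : eval (gens m) y = v) (hyw : weight y = minWeight (gens m) v)
    (hi : x i ≠ 0) (hj : y j ≠ 0) :
    ((circulant (order m) (gens m)).parents 0 v).ncard ≠ 1 := by
  rw [Ne, Set.ncard_eq_one]
  rintro ⟨u, hu⟩
  have h₁ := (mem_parents_zero_iff exists_eval_gens_eq).2 ⟨x, i, hx, hxw, hi, rfl⟩
  have h₂ := (mem_parents_zero_iff exists_eval_gens_eq).2 ⟨y, j, hy, hyw, hj, rfl⟩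
  rw [hu, Set.mem_singleton_iff] at h₁ h₂
  have hsingle := eq_of_eval_gens_eq
    (by rw [weight_single, Int.natAbs_sign_of_ne_zero hi]; omega)
    (by rw [weight_single, Int.natAbs_sign_of_ne_zero hj]; omega)
    (sub_right_injective (h₁.trans h₂.symm))
  simpa [hij, hi] using congrFun hsingle i

theorem exists_eval_single_eq_of_ncard_parents_eq_one (hm : 1 ≤ m) {v : ZMod (order m)}
    (hv : v ≠ 0) (h : ((circulant (order m) (gens m)).parents 0 v).ncard = 1) :
    ∃ i c, c ≠ 0 ∧ c.natAbs ≤ 2 * m ∧ eval (gens m) (Pi.single i c) = v := by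
  obtain ⟨x, hx, hxw⟩ := exists_weight_eq_minWeight _ (exists_eval_gens_eq (m := m) v)
  have hx0 : x ≠ 0 := by rintro rfl; exact hv (by rw [← hx, eval_zero])
  obtain ⟨i, hi⟩ := Function.ne_iff.1 hx0
  have hsingle : x = Pi.single i (x i) := by
    ext j
    by_cases hji : j = i
    · subst hji; simp
    · rw [Pi.single_eq_of_ne hji]
      by_contra hj
      exact ncard_parents_ne_one hm (Ne.symm hji) hx hxw hx hxw hi hj h
  refine ⟨i, x i, hi, ?_, by rw [← hsingle, hx]⟩
  by_contra hc
  obtain ⟨y, hy, hyw, j, hji, hj⟩ := exists_eval_eq_single_of_two_mul_lt hm (not_le.1 hc) i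
  rw [← hsingle, hx] at hy
  have hyw' : weight y = minWeight (gens m) v := by
    have := minWeight_le _ hy
    rw [hsingle, weight_single] at hxw
    omega
  exact ncard_parents_ne_one hm (Ne.symm hji) hx hxw hy hyw' hi hj h

theorem ne_zero_and_ncard_parents_eq_one_iff (hm : 1 ≤ m) (v : ZMod (order m)) :
    v ≠ 0 ∧ ((circulant (order m) (gens m)).parents 0 v).ncard = 1 ↔
      ∃ i c, c ≠ 0 ∧ c.natAbs ≤ 2 * m ∧ eval (gens m) (Pi.single i c) = v := by
  constructor
  · rintro ⟨hv, h⟩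
    exact exists_eval_single_eq_of_ncard_parents_eq_one hm hv h
  · rintro ⟨i, c, hc0, hc, rfl⟩
    refine ⟨fun h => hc0 ?_, by rw [parents_eval_single hc0 hc, Set.ncard_singleton]⟩
    have := eq_of_eval_gens_eq (y := 0) (by rwa [weight_single])
      (by rw [(weight_eq_zero_iff 0).2 rfl]; omega) (h.trans (eval_zero _).symm)
    simpa using congrFun this i

theorem ncard_eval_single :
    {v : ZMod (order m) |
      ∃ i c, c ≠ 0 ∧ c.natAbs ≤ 2 * m ∧ eval (gens m) (Pi.single i c) = v}.ncard =
      12 * m := by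
  let S : Finset (Fin 3 × ℤ) := Finset.univ ×ˢ (Finset.Icc (-(2 * m : ℤ)) (2 * m)).erase 0
  have hS : ∀ p : Fin 3 × ℤ, p ∈ S ↔ p.2 ≠ 0 ∧ p.2.natAbs ≤ 2 * m := by
    rintro ⟨i, c⟩
    simp only [S, Finset.mem_product, Finset.mem_univ, Finset.mem_erase, Finset.mem_Icc,
      true_and]
    omega
  have hset : {v : ZMod (order m) |
      ∃ i c, c ≠ 0 ∧ c.natAbs ≤ 2 * m ∧ eval (gens m) (Pi.single i c) = v} =
      ↑(S.image fun p =>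
        (eval (gens m) (Pi.single p.1 p.2) : ZMod (order m))) := by
    ext v
    simp only [Set.mem_ofPred_eq, Finset.coe_image, Set.mem_image, Finset.mem_coe, hS,
      Prod.exists]
    grind
  rw [hset, Set.ncard_coe_finset, Finset.card_image_of_injOn]
  · simp [S, Finset.card_erase_of_mem, Int.card_Icc]
    omega
  · rintro ⟨i, c⟩ hp ⟨j, d⟩ hq h
    rw [Finset.mem_coe, hS] at hp hq
    have hcd := eq_of_eval_gens_eq (by rw [weight_single]; exact hp.2)
      (by rw [weight_single]; exact hq.2) h
    obtain rfl : i = j := by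
      by_contra hij
      simpa [hij, hp.1] using congrFun hcd i
    simpa using congrFun hcd i

end ExtremalCirculant

/-- The largest known circulant graph of degree 6 and diameter `k = 3m` (isomorphism
class 1; order `n = 32m³+16m²+6m+1`, generators `1`, `4m+1`, `16m²+4m+1`) has exactly
`4k = 12m` type `T₁` vertices, i.e. vertices `v ≠ 0` with exactly one neighbour at
distance `dist(0,v) − 1` from `0`. -/
theorem stmt15 (m : ℕ) (hm : 1 ≤ m) :
    let n : ℕ := 32*m^3+16*m^2+6*m+1
    let X := circulant n ![(1 : ℤ), 4*(m : ℤ)+1, 16*(m : ℤ)^2+4*m+1]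
    {v : ZMod n | v ≠ 0 ∧
      {u : ZMod n | X.Adj v u ∧ X.dist 0 u = X.dist 0 v - 1}.ncard = 1}.ncard = 12*m := by
  show {v : ZMod (ExtremalCirculant.order m) | v ≠ 0 ∧
    ((circulant _ (ExtremalCirculant.gens m)).parents 0 v).ncard = 1}.ncard = 12 * m
  rw [← ExtremalCirculant.ncard_eval_single]
  exact congrArg Set.ncard (Set.ext (ExtremalCirculant.ne_zero_and_ncard_parents_eq_one_iff hm))
end
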